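/- arXiv:2201.07628 — 2 statements merged into one kernel-verified Lean document; each statement's English description precedes it below -/
import Mathlib

section
/- Heppes' theorem: Let Q be a discrete probability measure on ℝ^d supported on k points, and let H_1, …, H_{k+1} be linear subspaces of ℝ^d such that H_i^⊥ ∩ H_j^⊥ = {0} for all i ≠ j. If P is a Borel probability measure on ℝ^d with P_{H_i} = Q_{H_i} for each i = 1, …, k+1, then P = Q. -/
/-!
A point `y` off the support `S` of `Q` would, almost surely, project into the projection of `S`
along each of the `k + 1` directions; by pigeonhole two directions `i ≠ j` hit the same support
point `x`, so `y - x ∈ H_iᗮ ⊓ H_jᗮ = 0`. Hence `P` is also carried by `S`. The same pigeonhole,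
applied to `S` minus a point `x`, gives a direction along which `x` is the only point of `S`
in its fibre, so `P {x}` and `Q {x}` are both the mass of that fibre under the common projection.
-/

open MeasureTheory

/-- Total variation distance between two measures. -/
noncomputable def dTV {α : Type*} [MeasurableSpace α] (P Q : Measure α) : ℝ :=
  ⨆ A : {A : Set α // MeasurableSet A}, |(P A).toReal - (Q A).toReal|

/-- The projection of a measure `P` on `ℝ^d` onto a subspace `H`:
the pushforward of `P` under the orthogonal projection onto `H`. -/
noncomputable def projMeasure {d : ℕ} (H : Submodule ℝ (EuclideanSpace ℝ (Fin d)))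
    (P : Measure (EuclideanSpace ℝ (Fin d))) : Measure H :=
  P.map (H.orthogonalProjection)

open Set

section PairwiseSeparating

variable {α ι : Type*} {β : ι → Type*} [Fintype ι] {f : ∀ i, α → β i}

theorem mem_of_forall_mem_image
    (hf : Pairwise fun i j => ∀ x y, f i x = f i y → f j x = f j y → x = y)
    {S : Finset α} (hS : S.card < Fintype.card ι) {y : α} (hy : ∀ i, f i y ∈ f i '' S) :
    y ∈ S := by
  choose g hgS hg using hy
  obtain ⟨i, -, j, -, hij, hgij⟩ := Finset.exists_ne_map_eq_of_card_lt_of_maps_to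
    (s := Finset.univ) (t := S) (by simpa using hS) (f := g) fun i _ => hgS i
  have hgj : f j (g i) = f j y := by rw [hgij]; exact hg j
  exact hf hij _ _ (hg i) hgj ▸ hgS i

theorem exists_separating_index
    (hf : Pairwise fun i j => ∀ x y, f i x = f i y → f j x = f j y → x = y)
    {S : Finset α} (hS : S.card ≤ Fintype.card ι) {x : α} (hx : x ∈ S) :
    ∃ i, ∀ x' ∈ S, f i x' = f i x → x' = x := by
  classical
  by_contra! h
  have hx_erase : x ∈ S.erase x :=
    mem_of_forall_mem_image hf ((Finset.card_erase_lt_of_mem hx).trans_le hS) fun i => by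
      obtain ⟨x', hx'S, hx', hne⟩ := h i
      exact ⟨x', Finset.mem_erase.2 ⟨hne, hx'S⟩, hx'⟩
  simp at hx_erase

variable [MeasurableSpace α] [∀ i, MeasurableSpace (β i)]

theorem ae_mem_of_map_eq [∀ i, MeasurableSingletonClass (β i)] (hmeas : ∀ i, Measurable (f i))
    (hf : Pairwise fun i j => ∀ x y, f i x = f i y → f j x = f j y → x = y)
    {P Q : Measure α} {S : Finset α} (hS : S.card < Fintype.card ι) (hQ : ∀ᵐ x ∂Q, x ∈ S)
    (hPQ : ∀ i, P.map (f i) = Q.map (f i)) :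
    ∀ᵐ y ∂P, y ∈ S := by
  have himage : ∀ i, ∀ᵐ y ∂P, f i y ∈ f i '' S := fun i => by
    have hm : MeasurableSet (f i '' S) := (S.finite_toSet.image _).measurableSet
    refine (ae_map_iff (hmeas i).aemeasurable hm).1 ?_
    rw [hPQ i, ae_map_iff (hmeas i).aemeasurable hm]
    exact hQ.mono fun x hx => mem_image_of_mem _ hx
  filter_upwards [ae_all_iff.2 himage] with y hy using mem_of_forall_mem_image hf hS hy

end PairwiseSeparating

namespace MeasureTheory.Measure

variable {α : Type*} [MeasurableSpace α] {P Q : Measure α} {S : Finset α}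

theorem ext_of_ae_mem_finset [MeasurableSingletonClass α] (hP : ∀ᵐ x ∂P, x ∈ S)
    (hQ : ∀ᵐ x ∂Q, x ∈ S) (h : ∀ x ∈ S, P {x} = Q {x}) : P = Q := by
  classical
  have hrestrict : ∀ μ : Measure α, (∀ᵐ x ∂μ, x ∈ S) → ∀ A, μ A = ∑ x ∈ S with x ∈ A, μ {x} :=
    fun μ hμ A => by
      rw [sum_measure_singleton, ← measure_inter_conull (ae_iff.1 hμ)]
      congr 1
      ext x
      simp [and_comm]
  ext A -
  rw [hrestrict P hP, hrestrict Q hQ]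
  exact Finset.sum_congr rfl fun x hx => h x (Finset.mem_filter.1 hx).1

theorem measure_singleton_eq_of_map_eq {γ : Type*} [MeasurableSpace γ]
    [MeasurableSingletonClass γ] (hP : ∀ᵐ y ∂P, y ∈ S) (hQ : ∀ᵐ y ∂Q, y ∈ S) {g : α → γ}
    (hg : Measurable g) (hPQ : P.map g = Q.map g) {x : α}
    (hsep : ∀ x' ∈ S, g x' = g x → x' = x) :
    P {x} = Q {x} := by
  have hfibre : ∀ μ : Measure α, (∀ᵐ y ∂μ, y ∈ S) → μ (g ⁻¹' {g x}) = μ {x} := fun μ hμ =>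
    measure_congr <| hμ.mono fun y hy =>
      propext ⟨hsep y hy, fun hyx => congrArg g hyx⟩
  rw [← hfibre P hP, ← hfibre Q hQ, ← map_apply hg (measurableSet_singleton _), hPQ,
    map_apply hg (measurableSet_singleton _)]

theorem eq_of_map_eq_of_pairwise_separating {ι : Type*} [Fintype ι] [MeasurableSingletonClass α]
    {β : ι → Type*} [∀ i, MeasurableSpace (β i)] [∀ i, MeasurableSingletonClass (β i)]
    {f : ∀ i, α → β i} (hmeas : ∀ i, Measurable (f i))
    (hf : Pairwise fun i j => ∀ x y, f i x = f i y → f j x = f j y → x = y)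
    (hS : S.card < Fintype.card ι) (hQ : ∀ᵐ x ∂Q, x ∈ S)
    (hPQ : ∀ i, P.map (f i) = Q.map (f i)) :
    P = Q := by
  have hP := ae_mem_of_map_eq hmeas hf hS hQ hPQ
  refine ext_of_ae_mem_finset hP hQ fun x hx => ?_
  obtain ⟨i, hi⟩ := exists_separating_index hf hS.le hx
  exact measure_singleton_eq_of_map_eq hP hQ (hmeas i) (hPQ i) hi

end MeasureTheory.Measure

namespace Submodule

variable {𝕜 E : Type*} [RCLike 𝕜] [NormedAddCommGroup E] [InnerProductSpace 𝕜 E]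

theorem orthogonalProjectionOnto_eq_iff {K : Submodule 𝕜 E} [K.HasOrthogonalProjection]
    {x y : E} : K.orthogonalProjectionOnto x = K.orthogonalProjectionOnto y ↔ x - y ∈ Kᗮ := by
  rw [← sub_eq_zero, ← map_sub, orthogonalProjectionOnto_eq_zero_iff]

theorem eq_of_orthogonalProjectionOnto_eq {K L : Submodule 𝕜 E} [K.HasOrthogonalProjection]
    [L.HasOrthogonalProjection] (hKL : Kᗮ ⊓ Lᗮ = ⊥) {x y : E}
    (hK : K.orthogonalProjectionOnto x = K.orthogonalProjectionOnto y)
    (hL : L.orthogonalProjectionOnto x = L.orthogonalProjectionOnto y) :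
    x = y := by
  rw [← sub_eq_zero, ← mem_bot 𝕜, ← hKL]
  exact ⟨orthogonalProjectionOnto_eq_iff.1 hK, orthogonalProjectionOnto_eq_iff.1 hL⟩

end Submodule

theorem stmt3_general {d k : ℕ} (P Q : Measure (EuclideanSpace ℝ (Fin d)))
    (S : Finset (EuclideanSpace ℝ (Fin d))) (hScard : S.card = k)
    (hQS : Q (↑S : Set (EuclideanSpace ℝ (Fin d)))ᶜ = 0)
    (H : Fin (k + 1) → Submodule ℝ (EuclideanSpace ℝ (Fin d)))
    (hH : ∀ i j, i ≠ j → (H i)ᗮ ⊓ (H j)ᗮ = ⊥)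
    (hproj : ∀ i, projMeasure (H i) P = projMeasure (H i) Q) :
    P = Q :=
  Measure.eq_of_map_eq_of_pairwise_separating
    (f := fun i => (H i).orthogonalProjectionOnto)
    (fun i => (H i).orthogonalProjectionOnto.continuous.measurable)
    (fun i j hij _ _ => Submodule.eq_of_orthogonalProjectionOnto_eq (hH i j hij))
    (by simp [hScard]) (ae_iff.2 hQS) hproj

/-- Heppes' theorem. -/
theorem stmt3 {d k : ℕ} (P Q : Measure (EuclideanSpace ℝ (Fin d)))
    [IsProbabilityMeasure P] [IsProbabilityMeasure Q]
    (S : Finset (EuclideanSpace ℝ (Fin d))) (hScard : S.card = k)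
    (hQS : Q (↑S : Set (EuclideanSpace ℝ (Fin d)))ᶜ = 0)
    (H : Fin (k + 1) → Submodule ℝ (EuclideanSpace ℝ (Fin d)))
    (hH : ∀ i j, i ≠ j → (H i)ᗮ ⊓ (H j)ᗮ = ⊥)
    (hproj : ∀ i, projMeasure (H i) P = projMeasure (H i) Q) :
    P = Q :=
  stmt3_general P Q S hScard hQS H hH hproj
end

section
/- Let P and Q be Borel probability measures on ℝ^d both supported on a countable set E ⊂ ℝ^d, and let H be a linear subspace of ℝ^d with H^⊥ ∩ (E − E) = {0}. Then d_TV(P,Q) = d_TV(P_H, Q_H). In particular, if P_H = Q_H then P = Q. -/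
/-!
The projection `π_H` is injective on `E`: if `π_H x = π_H y` with `x, y ∈ E`, then
`x - y ∈ H^⊥ ∩ (E - E) = {0}`. Since `P` and `Q` live on `E`, every event `A` has the same
`P`- and `Q`-mass as the countable, hence measurable, set `π_H (A ∩ E)` has under `P_H`
and `Q_H`.
Thus every event upstairs is matched by one downstairs, and conversely preimages match events
downstairs, so both suprema defining the total variation distance agree.
-/

open MeasureTheory

open Pointwise

open Set

section TotalVariation

variable {α β : Type*} [MeasurableSpace α] [MeasurableSpace β]

lemma abs_toReal_sub_toReal_le (μ ν : Measure α) [IsFiniteMeasure μ] [IsFiniteMeasure ν]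
    (A : Set α) : |(μ A).toReal - (ν A).toReal| ≤ μ.real univ + ν.real univ := by
  have hμ : μ.real A ≤ μ.real univ := measureReal_mono (subset_univ A)
  have hν : ν.real A ≤ ν.real univ := measureReal_mono (subset_univ A)
  have hμ₀ : 0 ≤ μ.real A := measureReal_nonneg
  have hν₀ : 0 ≤ ν.real A := measureReal_nonneg
  rw [← measureReal_def, ← measureReal_def, abs_sub_le_iff]
  constructor <;> linarith

lemma dTV_le_of_forall_exists {μ ν : Measure α} {μ' ν' : Measure β}
    [IsFiniteMeasure μ'] [IsFiniteMeasure ν']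
    (h : ∀ A, MeasurableSet A → ∃ B, MeasurableSet B ∧ μ A = μ' B ∧ ν A = ν' B) :
    dTV μ ν ≤ dTV μ' ν' := by
  have : Nonempty {A : Set α // MeasurableSet A} := ⟨⟨∅, .empty⟩⟩
  have hbdd : BddAbove (range fun B : {B : Set β // MeasurableSet B} =>
      |(μ' B).toReal - (ν' B).toReal|) :=
    ⟨_, forall_mem_range.2 fun B => abs_toReal_sub_toReal_le μ' ν' B⟩
  refine ciSup_le fun ⟨A, hA⟩ => ?_
  obtain ⟨B, hB, hμB, hνB⟩ := h A hA
  rw [hμB, hνB]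
  exact le_ciSup hbdd ⟨B, hB⟩

lemma dTV_map_le {f : α → β} (hf : Measurable f) (μ ν : Measure α)
    [IsFiniteMeasure μ] [IsFiniteMeasure ν] : dTV (μ.map f) (ν.map f) ≤ dTV μ ν :=
  dTV_le_of_forall_exists fun B hB =>
    ⟨f ⁻¹' B, hf hB, Measure.map_apply hf hB, Measure.map_apply hf hB⟩

variable [MeasurableSingletonClass β] {E : Set α} {f : α → β}

lemma map_apply_image_inter_of_injOn {μ : Measure α} (hE : E.Countable) (hμE : μ Eᶜ = 0)
    (hf : Measurable f) (hinj : InjOn f E) (A : Set α) :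
    μ.map f (f '' (A ∩ E)) = μ A := by
  rw [Measure.map_apply hf ((hE.mono inter_subset_right).image f).measurableSet,
    ← measure_inter_conull hμE, hinj.preimage_image_inter inter_subset_right,
    measure_inter_conull hμE]

lemma dTV_map_eq_of_injOn {μ ν : Measure α} [IsFiniteMeasure μ] [IsFiniteMeasure ν]
    (hE : E.Countable) (hμE : μ Eᶜ = 0) (hνE : ν Eᶜ = 0) (hf : Measurable f)
    (hinj : InjOn f E) : dTV (μ.map f) (ν.map f) = dTV μ ν :=
  le_antisymm (dTV_map_le hf μ ν) <| dTV_le_of_forall_exists fun A _ =>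
    ⟨f '' (A ∩ E), ((hE.mono inter_subset_right).image f).measurableSet,
      (map_apply_image_inter_of_injOn hE hμE hf hinj A).symm,
      (map_apply_image_inter_of_injOn hE hνE hf hinj A).symm⟩

lemma eq_of_map_eq_of_injOn {μ ν : Measure α} (hE : E.Countable) (hμE : μ Eᶜ = 0)
    (hνE : ν Eᶜ = 0) (hf : Measurable f) (hinj : InjOn f E) (h : μ.map f = ν.map f) :
    μ = ν :=
  Measure.ext fun A _ => by
    rw [← map_apply_image_inter_of_injOn hE hμE hf hinj A,
      ← map_apply_image_inter_of_injOn hE hνE hf hinj A, h]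

end TotalVariation

lemma injOn_of_preimage_zero_inter_sub_subset {G G' F : Type*} [AddGroup G] [AddGroup G']
    [FunLike F G G'] [AddMonoidHomClass F G G'] (f : F) {E : Set G}
    (h : f ⁻¹' {0} ∩ (E - E) ⊆ {0}) : InjOn f E := fun x hx y hy hxy =>
  sub_eq_zero.1 <| h ⟨by simp [map_sub, hxy], sub_mem_sub hx hy⟩

lemma injOn_orthogonalProjection {V : Type*} [NormedAddCommGroup V] [InnerProductSpace ℝ V]
    (H : Submodule ℝ V) [H.HasOrthogonalProjection] {E : Set V}
    (hH : (Hᗮ : Set V) ∩ (E - E) ⊆ {0}) : InjOn H.orthogonalProjectionOnto E :=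
  injOn_of_preimage_zero_inter_sub_subset H.orthogonalProjectionOnto fun _ ⟨hv, hvE⟩ =>
    hH ⟨Submodule.orthogonalProjectionOnto_eq_zero_iff.1 hv, hvE⟩

theorem stmt5 {d : ℕ} (P Q : Measure (EuclideanSpace ℝ (Fin d)))
    [IsProbabilityMeasure P] [IsProbabilityMeasure Q]
    (E : Set (EuclideanSpace ℝ (Fin d))) (hE : E.Countable)
    (hPE : P Eᶜ = 0) (hQE : Q Eᶜ = 0)
    (H : Submodule ℝ (EuclideanSpace ℝ (Fin d)))
    (hH : (Hᗮ : Set (EuclideanSpace ℝ (Fin d))) ∩ (E - E) ⊆ {0}) :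
    dTV P Q = dTV (projMeasure H P) (projMeasure H Q) ∧
      (projMeasure H P = projMeasure H Q → P = Q) := by
  have hπ : Measurable H.orthogonalProjectionOnto :=
    H.orthogonalProjectionOnto.continuous.measurable
  have hinj := injOn_orthogonalProjection H hH
  exact ⟨(dTV_map_eq_of_injOn hE hPE hQE hπ hinj).symm,
    eq_of_map_eq_of_injOn hE hPE hQE hπ hinj⟩
end
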